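/- Let p > 0, let α_1,…,α_N be positive real numbers, and let u_1,…,u_N (N ≥ n+1) be unit vectors in ℝ^n not concentrated on a closed hemisphere. Suppose P_k ∈ P(u_1,…,u_N) is a sequence of polytopes each containing the origin, and suppose the circumradii R(P_k) = max{|x| : x ∈ P_k} are not bounded. Then the sequence Σ_{i=1}^N α_i h(P_k,u_i)^p is not bounded. -/

import Mathlib

open MeasureTheory Set
open scoped RealInnerProductSpace

noncomputable section

/-- A polytope: convex hull of finitely many points with positive volume. -/
def IsPolytope {n : ℕ} (P : Set (EuclideanSpace ℝ (Fin n))) : Prop :=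
  ∃ S : Finset (EuclideanSpace ℝ (Fin n)),
    P = convexHull ℝ (S : Set (EuclideanSpace ℝ (Fin n))) ∧ 0 < volume P

/-- Support function of a set. -/
def suppF {n : ℕ} (P : Set (EuclideanSpace ℝ (Fin n))) (u : EuclideanSpace ℝ (Fin n)) : ℝ :=
  sSup ((fun x => ⟪x, u⟫) '' P)

/-- Support set F(P,u). -/
def suppSet {n : ℕ} (P : Set (EuclideanSpace ℝ (Fin n))) (u : EuclideanSpace ℝ (Fin n)) :
    Set (EuclideanSpace ℝ (Fin n)) :=
  {x ∈ P | ⟪x, u⟫ = suppF P u}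

/-- (n-1)-dimensional Hausdorff measure of the support set F(P,u), as a real number. -/
def facetArea {n : ℕ} (P : Set (EuclideanSpace ℝ (Fin n))) (u : EuclideanSpace ℝ (Fin n)) : ℝ :=
  (MeasureTheory.Measure.hausdorffMeasure ((n : ℝ) - 1) (suppSet P u)).toReal

/-- The unit vectors u 1, ..., u N are not concentrated on a closed hemisphere. -/
def NotOnClosedHemisphere {n N : ℕ} (u : Fin N → EuclideanSpace ℝ (Fin n)) : Prop :=
  ¬ ∃ v : EuclideanSpace ℝ (Fin n), ‖v‖ = 1 ∧ ∀ i, 0 ≤ ⟪u i, v⟫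

/-- Membership in the class P(u₁,...,u_N). -/
def InPolyClass {n N : ℕ} (u : Fin N → EuclideanSpace ℝ (Fin n))
    (P : Set (EuclideanSpace ℝ (Fin n))) : Prop :=
  IsPolytope P ∧ P = ⋂ k, {x | ⟪x, u k⟫ ≤ suppF P (u k)}

/-- The functional Φ_P(ξ) = Σ α_k (h(P,u_k) - ξ·u_k)^p. -/
def Phi {n N : ℕ} (α : Fin N → ℝ) (u : Fin N → EuclideanSpace ℝ (Fin n)) (p : ℝ)
    (P : Set (EuclideanSpace ℝ (Fin n))) (ξ : EuclideanSpace ℝ (Fin n)) : ℝ :=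
  ∑ k, α k * (suppF P (u k) - ⟪ξ, u k⟫) ^ p

/-- The circumradius R(P) = max{|x| : x ∈ P}. -/
def circumRadius {n : ℕ} (P : Set (EuclideanSpace ℝ (Fin n))) : ℝ :=
  sSup ((fun x => ‖x‖) '' P)

/-!
A finite family of vectors not contained in a closed hemisphere "sees" every direction with a
uniform margin: by compactness of the unit sphere there is `c > 0` such that every `x` satisfies
`c ‖x‖ ≤ ⟪x, u i⟫` for some `i`. Applying this to a point of `P` at distance almost `R(P)` from the
origin gives `h(P, u i) ≥ c R(P)` for some `i`, so the sum `∑ α i h(P, u i) ^ p`, whose terms are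
nonnegative because `0 ∈ P`, is at least `α i (c R(P)) ^ p`.
-/

open Filter

theorem exists_pos_mul_norm_le_inner {E ι : Type*} [NormedAddCommGroup E] [InnerProductSpace ℝ E]
    [ProperSpace E] [Fintype ι] {u : ι → E} (hu : ∀ v : E, v ≠ 0 → ∃ i, 0 < ⟪v, u i⟫) :
    ∃ c > 0, ∀ x : E, x ≠ 0 → ∃ i, c * ‖x‖ ≤ ⟪x, u i⟫ := by
  obtain hι | hι := isEmpty_or_nonempty ι
  · exact ⟨1, one_pos, fun x hx => isEmptyElim (hu x hx).choose⟩
  set f : E → ℝ := fun x => Finset.univ.sup' Finset.univ_nonempty fun i => ⟪x, u i⟫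
  have hf_cont : Continuous f :=
    Continuous.finset_sup'_apply _ fun i _ => continuous_id.inner continuous_const
  have hf_attained : ∀ x, ∃ i, f x = ⟪x, u i⟫ := fun x => by
    obtain ⟨i, -, hi⟩ := Finset.exists_mem_eq_sup' Finset.univ_nonempty fun i => ⟪x, u i⟫
    exact ⟨i, hi⟩
  have hf_pos : ∀ x ≠ 0, 0 < f x := fun x hx => by
    obtain ⟨i, hi⟩ := hu x hx
    exact hi.trans_le (Finset.le_sup' (fun i => ⟪x, u i⟫) (Finset.mem_univ i))
  obtain ⟨c, hc, hcf⟩ : ∃ c > 0, ∀ v ∈ Metric.sphere (0 : E) 1, c ≤ f v := by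
    rcases (Metric.sphere (0 : E) 1).eq_empty_or_nonempty with hS | hS
    · exact ⟨1, one_pos, by simp [hS]⟩
    obtain ⟨v, hv, hmin⟩ := (isCompact_sphere (0 : E) 1).exists_isMinOn hS hf_cont.continuousOn
    exact ⟨f v, hf_pos v (ne_zero_of_mem_unit_sphere ⟨v, hv⟩), hmin⟩
  refine ⟨c, hc, fun x hx => ?_⟩
  obtain ⟨i, hi⟩ := hf_attained (‖x‖⁻¹ • x)
  have hcx := hcf _ (by simpa using norm_smul_inv_norm (𝕜 := ℝ) hx)
  rw [hi, real_inner_smul_left, le_inv_mul_iff₀ (norm_pos_iff.2 hx)] at hcx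
  exact ⟨i, by rwa [mul_comm]⟩

section Polytopes

variable {n : ℕ}

theorem NotOnClosedHemisphere.exists_inner_pos {N : ℕ} {u : Fin N → EuclideanSpace ℝ (Fin n)}
    (hu : NotOnClosedHemisphere u) {v : EuclideanSpace ℝ (Fin n)} (hv : v ≠ 0) :
    ∃ i, 0 < ⟪v, u i⟫ := by
  by_contra! hle
  refine hu ⟨-(‖v‖⁻¹ • v), by simpa using norm_smul_inv_norm (𝕜 := ℝ) hv, fun i => ?_⟩
  rw [inner_neg_right, real_inner_smul_right, real_inner_comm]
  exact neg_nonneg.2 (mul_nonpos_of_nonneg_of_nonpos (by positivity) (hle i))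

theorem IsPolytope.isCompact {P : Set (EuclideanSpace ℝ (Fin n))} (hP : IsPolytope P) :
    IsCompact P := by
  obtain ⟨S, rfl, -⟩ := hP
  exact S.finite_toSet.isCompact_convexHull (𝕜 := ℝ)

theorem inner_le_suppF {P : Set (EuclideanSpace ℝ (Fin n))} (hP : Bornology.IsBounded P)
    {x : EuclideanSpace ℝ (Fin n)} (hx : x ∈ P) (u : EuclideanSpace ℝ (Fin n)) :
    ⟪x, u⟫ ≤ suppF P u := by
  refine le_csSup ?_ ⟨x, hx, rfl⟩
  have := ((innerSL ℝ u).lipschitz.isBounded_image hP).bddAbove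
  simpa [real_inner_comm] using this

theorem suppF_nonneg {P : Set (EuclideanSpace ℝ (Fin n))} (hP : Bornology.IsBounded P)
    (h0 : 0 ∈ P) (u : EuclideanSpace ℝ (Fin n)) : 0 ≤ suppF P u := by
  simpa using inner_le_suppF hP h0 u

theorem exists_lt_norm_of_lt_circumRadius {P : Set (EuclideanSpace ℝ (Fin n))} {r : ℝ}
    (hr : 0 ≤ r) (h : r < circumRadius P) : ∃ x ∈ P, r < ‖x‖ := by
  by_contra! hle
  exact h.not_ge (Real.sSup_le (by rintro _ ⟨x, hx, rfl⟩; exact hle x hx) hr)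

theorem exists_mul_le_suppF_of_lt_circumRadius {N : ℕ} {u : Fin N → EuclideanSpace ℝ (Fin n)}
    {c r : ℝ} (hc : 0 ≤ c) (hu : ∀ x ≠ 0, ∃ i, c * ‖x‖ ≤ ⟪x, u i⟫)
    {P : Set (EuclideanSpace ℝ (Fin n))} (hP : Bornology.IsBounded P) (hr : 0 ≤ r)
    (hrP : r < circumRadius P) : ∃ i, c * r ≤ suppF P (u i) := by
  obtain ⟨x, hxP, hrx⟩ := exists_lt_norm_of_lt_circumRadius hr hrP
  obtain ⟨i, hi⟩ := hu x (norm_pos_iff.1 (hr.trans_lt hrx))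
  exact ⟨i, (mul_le_mul_of_nonneg_left hrx.le hc).trans (hi.trans (inner_le_suppF hP hxP _))⟩

end Polytopes

theorem sum_suppF_pow_unbounded_of_circumRadius_unbounded_general
    {n N : ℕ}
    (p : ℝ) (hp0 : 0 < p)
    (α : Fin N → ℝ) (hα : ∀ i, 0 < α i)
    (u : Fin N → EuclideanSpace ℝ (Fin n))
    (hhem : NotOnClosedHemisphere u)
    (P : ℕ → Set (EuclideanSpace ℝ (Fin n))) (hP : ∀ k, InPolyClass u (P k))
    (ho : ∀ k, (0 : EuclideanSpace ℝ (Fin n)) ∈ P k)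
    (hR : ¬ BddAbove (Set.range fun k => circumRadius (P k))) :
    ¬ BddAbove (Set.range fun k => ∑ i, α i * (suppF (P k) (u i)) ^ p) := by
  obtain ⟨c, hc, hcu⟩ := exists_pos_mul_norm_le_inner fun v hv => hhem.exists_inner_pos hv
  have hbdd : ∀ k, Bornology.IsBounded (P k) := fun k => (hP k).1.isCompact.isBounded
  rw [not_bddAbove_iff] at hR ⊢
  intro M
  have hlarge : ∀ᶠ r in atTop, 0 ≤ r ∧ ∀ i, M < α i * (c * r) ^ p :=
    (eventually_ge_atTop 0).and <| eventually_all.2 fun i =>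
      (((tendsto_rpow_atTop hp0).comp (tendsto_id.const_mul_atTop hc)).const_mul_atTop
        (hα i)).eventually_gt_atTop M
  obtain ⟨r, hr0, hrM⟩ := hlarge.exists
  obtain ⟨_, ⟨k, rfl⟩, hk⟩ := hR r
  obtain ⟨i, hi⟩ := exists_mul_le_suppF_of_lt_circumRadius hc.le hcu (hbdd k) hr0 hk
  have hterm_nonneg : ∀ j, 0 ≤ α j * suppF (P k) (u j) ^ p := fun j =>
    mul_nonneg (hα j).le (Real.rpow_nonneg (suppF_nonneg (hbdd k) (ho k) _) _)
  refine ⟨_, ⟨k, rfl⟩, ?_⟩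
  calc M < α i * (c * r) ^ p := hrM i
    _ ≤ α i * suppF (P k) (u i) ^ p :=
      mul_le_mul_of_nonneg_left (Real.rpow_le_rpow (by positivity) hi hp0.le) (hα i).le
    _ ≤ ∑ j, α j * suppF (P k) (u j) ^ p :=
      Finset.single_le_sum (fun j _ => hterm_nonneg j) (Finset.mem_univ i)

/-- If the circumradii of polytopes P_k (containing the origin) are unbounded,
then Σ α_i h(P_k,u_i)^p is unbounded (Lemma 3.4). -/
theorem sum_suppF_pow_unbounded_of_circumRadius_unbounded
    {n N : ℕ} (hn : 2 ≤ n) (hN : n + 1 ≤ N)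
    (p : ℝ) (hp0 : 0 < p)
    (α : Fin N → ℝ) (hα : ∀ i, 0 < α i)
    (u : Fin N → EuclideanSpace ℝ (Fin n)) (hu : ∀ i, ‖u i‖ = 1)
    (hhem : NotOnClosedHemisphere u)
    (P : ℕ → Set (EuclideanSpace ℝ (Fin n))) (hP : ∀ k, InPolyClass u (P k))
    (ho : ∀ k, (0 : EuclideanSpace ℝ (Fin n)) ∈ P k)
    (hR : ¬ BddAbove (Set.range fun k => circumRadius (P k))) :
    ¬ BddAbove (Set.range fun k => ∑ i, α i * (suppF (P k) (u i)) ^ p) :=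
  sum_suppF_pow_unbounded_of_circumRadius_unbounded_general p hp0 α hα u hhem P hP ho hR
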